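/- arXiv:1307.5620 — 4 statements merged into one kernel-verified Lean document; each statement's English description precedes it below -/
import Mathlib

section
/- The inclusions cs₀^λ ⊆ cs^λ ⊆ bs^λ hold and both are strict: there exists x ∈ cs^λ with x ∉ cs₀^λ (for instance x_k = (λ_k/(k+2)² − λ_{k−1}/(k+1)²)/(λ_k − λ_{k−1})), and there exists y ∈ bs^λ with y ∉ cs^λ (for instance y_k = (−1)^k·(λ_k + λ_{k−1})/(λ_k − λ_{k−1})). -/
/-!
The map `x ↦ Λ(x)` is inverted explicitly: for any sequence `a`, the sequence
`x_k = (λ_k a_k − λ_{k−1} a_{k−1}) / (λ_k − λ_{k−1})` has `Λ_n(x) = a_n`, because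
`∑_{k ≤ n} (λ_k − λ_{k−1}) x_k` telescopes to `λ_n a_n`. Both witnesses are of this form, so their
series `∑ Λ_n` are just `∑ 1/(n+2)²`, which converges to a positive limit, and `∑ (−1)ⁿ`, whose
partial sums are bounded but whose terms do not tend to `0`.
-/

open Filter Topology

/-- `dl l k = λ_k - λ_{k-1}` with the convention `λ_{-1} = 0`. -/
noncomputable def dl (l : ℕ → ℝ) (k : ℕ) : ℝ := l k - (if k = 0 then 0 else l (k - 1))

/-- `LamT l x n = Λ_n(x) = (1/λ_n) ∑_{k=0}^n (λ_k - λ_{k-1}) x_k`. -/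
noncomputable def LamT (l : ℕ → ℝ) (x : ℕ → ℂ) (n : ℕ) : ℂ :=
  (1 / (l n : ℂ)) * ∑ k ∈ Finset.range (n + 1), ((dl l k : ℝ) : ℂ) * x k

/-- `cs^λ`: the partial sums `∑_{n=0}^m Λ_n(x)` converge. -/
def csLam (l : ℕ → ℝ) : Set (ℕ → ℂ) :=
  {x | ∃ L, Tendsto (fun m => ∑ n ∈ Finset.range (m + 1), LamT l x n) atTop (𝓝 L)}

/-- `cs₀^λ`: the partial sums `∑_{n=0}^m Λ_n(x)` tend to `0`. -/
def cs0Lam (l : ℕ → ℝ) : Set (ℕ → ℂ) :=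
  {x | Tendsto (fun m => ∑ n ∈ Finset.range (m + 1), LamT l x n) atTop (𝓝 0)}

/-- `bs^λ`: the partial sums `∑_{n=0}^m Λ_n(x)` are bounded. -/
def bsLam (l : ℕ → ℝ) : Set (ℕ → ℂ) :=
  {x | ∃ C, ∀ m, ‖∑ n ∈ Finset.range (m + 1), LamT l x n‖ ≤ C}

open Finset

theorem cs0Lam_subset_csLam (l : ℕ → ℝ) : cs0Lam l ⊆ csLam l :=
  fun _ hx => ⟨0, hx⟩

theorem csLam_subset_bsLam (l : ℕ → ℝ) : csLam l ⊆ bsLam l := by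
  rintro x ⟨L, hL⟩
  obtain ⟨C, hC⟩ := hL.norm.bddAbove_range
  exact ⟨C, fun m => hC ⟨m, rfl⟩⟩

theorem dl_pos {l : ℕ → ℝ} (hmono : StrictMono l) (hpos : 0 < l 0) (k : ℕ) : 0 < dl l k := by
  cases k with
  | zero => simpa [dl] using hpos
  | succ k => simpa [dl] using hmono k.lt_succ_self

noncomputable def invLamT (l : ℕ → ℝ) (a : ℕ → ℂ) (k : ℕ) : ℂ :=
  (l k * a k - if k = 0 then 0 else l (k - 1) * a (k - 1)) / (dl l k : ℂ)

theorem sum_range_succ_sub_prev (f : ℕ → ℂ) (n : ℕ) :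
    ∑ k ∈ range (n + 1), (f k - if k = 0 then 0 else f (k - 1)) = f n := by
  induction n with
  | zero => simp
  | succ n ih => rw [sum_range_succ, ih]; simp

theorem LamT_invLamT {l : ℕ → ℝ} (hl : ∀ n, l n ≠ 0) (hdl : ∀ k, dl l k ≠ 0) (a : ℕ → ℂ)
    (n : ℕ) : LamT l (invLamT l a) n = a n := by
  have hcancel : ∀ k, (dl l k : ℂ) * invLamT l a k =
      l k * a k - if k = 0 then 0 else l (k - 1) * a (k - 1) := fun k =>
    mul_div_cancel₀ _ (Complex.ofReal_ne_zero.mpr (hdl k))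
  rw [LamT, sum_congr rfl fun k _ => hcancel k,
    sum_range_succ_sub_prev (fun k => (l k : ℂ) * a k)]
  field_simp [Complex.ofReal_ne_zero.mpr (hl n)]

section Monotone

variable {l : ℕ → ℝ} (hmono : StrictMono l) (hpos : 0 < l 0)
include hmono hpos

theorem sum_LamT_invLamT (a : ℕ → ℂ) (m : ℕ) :
    ∑ n ∈ range (m + 1), LamT l (invLamT l a) n = ∑ n ∈ range (m + 1), a n :=
  sum_congr rfl fun n _ =>
    LamT_invLamT (fun n => (hpos.trans_le (hmono.monotone n.zero_le)).ne')
      (fun k => (dl_pos hmono hpos k).ne') a n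

theorem invLamT_mem_csLam_diff_cs0Lam {a : ℕ → ℂ} {L : ℂ}
    (ha : Tendsto (fun m => ∑ n ∈ range (m + 1), a n) atTop (𝓝 L)) (hL : L ≠ 0) :
    invLamT l a ∈ csLam l \ cs0Lam l := by
  simp only [Set.mem_sdiff, csLam, cs0Lam, Set.mem_ofPred_eq, sum_LamT_invLamT hmono hpos]
  exact ⟨⟨L, ha⟩, fun h0 => hL (tendsto_nhds_unique ha h0)⟩

theorem invLamT_mem_bsLam_diff_csLam {a : ℕ → ℂ} {C : ℝ}
    (hbdd : ∀ m, ‖∑ n ∈ range (m + 1), a n‖ ≤ C) (ha : ¬ Tendsto a atTop (𝓝 0)) :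
    invLamT l a ∈ bsLam l \ csLam l := by
  simp only [Set.mem_sdiff, csLam, bsLam, Set.mem_ofPred_eq, sum_LamT_invLamT hmono hpos]
  refine ⟨⟨C, hbdd⟩, fun ⟨L, hL⟩ => ha ?_⟩
  have hstep := (hL.comp (tendsto_add_atTop_nat 1)).sub hL
  simp only [Function.comp_def, sub_self, sum_range_succ _ (_ + 1), add_sub_cancel_left] at hstep
  exact (tendsto_add_atTop_iff_nat 1).mp hstep

end Monotone

theorem tendsto_sum_range_succ_inv_add_two_sq :
    ∃ L : ℝ, 0 < L ∧
      Tendsto (fun m => ∑ n ∈ range (m + 1), 1 / ((n : ℝ) + 2) ^ 2) atTop (𝓝 L) := by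
  have hsum : Summable fun n : ℕ => 1 / ((n : ℝ) + 2) ^ 2 := by
    refine ((summable_nat_add_iff 2).mpr
      (Real.summable_one_div_nat_pow.mpr one_lt_two)).congr fun n => ?_
    push_cast
    ring
  exact ⟨_, hsum.tsum_pos (fun n => by positivity) 0 (by positivity),
    hsum.hasSum.tendsto_sum_nat.comp (tendsto_add_atTop_nat 1)⟩

theorem norm_sum_range_neg_one_pow_le_one (m : ℕ) :
    ‖∑ n ∈ range m, (-1 : ℂ) ^ n‖ ≤ 1 := by
  rw [neg_one_geom_sum]
  split <;> simp

theorem not_tendsto_neg_one_pow_zero : ¬ Tendsto (fun n : ℕ => (-1 : ℂ) ^ n) atTop (𝓝 0) := by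
  intro h
  have := h.norm
  simp only [norm_pow, norm_neg, norm_one, one_pow, norm_zero] at this
  exact one_ne_zero (tendsto_nhds_unique tendsto_const_nhds this)

theorem stmt3_general (l : ℕ → ℝ) (hmono : StrictMono l) (hpos : 0 < l 0) :
    cs0Lam l ⊆ csLam l ∧ csLam l ⊆ bsLam l ∧
    ((fun k => (((l k * (1 / ((k : ℝ) + 2) ^ 2) -
        (if k = 0 then 0 else l (k - 1)) * (1 / ((k : ℝ) + 1) ^ 2)) / dl l k : ℝ) : ℂ)) ∈
      csLam l \ cs0Lam l) ∧
    ((fun k => (((-1 : ℝ) ^ k * (l k + (if k = 0 then 0 else l (k - 1))) / dl l k : ℝ) : ℂ)) ∈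
      bsLam l \ csLam l) := by
  refine ⟨cs0Lam_subset_csLam l, csLam_subset_bsLam l, ?_, ?_⟩
  · have hx : (fun k => (((l k * (1 / ((k : ℝ) + 2) ^ 2) -
        (if k = 0 then 0 else l (k - 1)) * (1 / ((k : ℝ) + 1) ^ 2)) / dl l k : ℝ) : ℂ)) =
        invLamT l fun k => ((1 / ((k : ℝ) + 2) ^ 2 : ℝ) : ℂ) := by
      funext k
      cases k with
      | zero => simp [invLamT]
      | succ k =>
        simp only [invLamT, Nat.succ_ne_zero, if_false, Nat.add_sub_cancel]
        push_cast
        ring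
    obtain ⟨L, hL, hsum⟩ := tendsto_sum_range_succ_inv_add_two_sq
    rw [hx]
    refine invLamT_mem_csLam_diff_cs0Lam hmono hpos ?_ (Complex.ofReal_ne_zero.mpr hL.ne')
    simpa [Function.comp_def] using (Complex.continuous_ofReal.tendsto L).comp hsum
  · have hy : (fun k => (((-1 : ℝ) ^ k * (l k + (if k = 0 then 0 else l (k - 1))) / dl l k : ℝ) :
        ℂ)) = invLamT l fun k => (-1 : ℂ) ^ k := by
      funext k
      cases k with
      | zero => simp [invLamT]
      | succ k =>
        simp only [invLamT, Nat.succ_ne_zero, if_false, Nat.add_sub_cancel]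
        push_cast
        ring
    rw [hy]
    exact invLamT_mem_bsLam_diff_csLam hmono hpos
      (fun m => norm_sum_range_neg_one_pow_le_one (m + 1)) not_tendsto_neg_one_pow_zero

theorem stmt3 (l : ℕ → ℝ) (hmono : StrictMono l) (hpos : 0 < l 0)
    (hlim : Tendsto l atTop atTop) :
    cs0Lam l ⊆ csLam l ∧ csLam l ⊆ bsLam l ∧
    ((fun k => (((l k * (1 / ((k : ℝ) + 2) ^ 2) -
        (if k = 0 then 0 else l (k - 1)) * (1 / ((k : ℝ) + 1) ^ 2)) / dl l k : ℝ) : ℂ)) ∈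
      csLam l \ cs0Lam l) ∧
    ((fun k => (((-1 : ℝ) ^ k * (l k + (if k = 0 then 0 else l (k - 1))) / dl l k : ℝ) : ℂ)) ∈
      bsLam l \ csLam l) :=
  stmt3_general l hmono hpos
end

section
/- The inclusion cs₀^λ ⊆ cs₀ holds if and only if S(x) ∈ cs₀ for every sequence x ∈ cs₀^λ; that is, every x with ∑_{n=0}^m Λ_n(x) → 0 satisfies ∑_{k=0}^m x_k → 0 if and only if for every such x one has ∑_{n=0}^m S_n(x) → 0. -/
open Filter Topology

/-- `Sop l x n = S_n(x)`: `S_0(x) = 0` and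
`S_n(x) = (1/λ_n) ∑_{k=1}^n λ_{k-1} (x_k - x_{k-1})` for `n ≥ 1`. -/
noncomputable def Sop (l : ℕ → ℝ) (x : ℕ → ℂ) (n : ℕ) : ℂ :=
  if n = 0 then 0
  else (1 / (l n : ℂ)) * ∑ k ∈ Finset.Icc 1 n, (l (k - 1) : ℂ) * (x k - x (k - 1))


/- Summation by parts gives `Λ_n(x) + S_n(x) = x_n`, so for `x ∈ cs₀^λ` the partial sums of `x`
and those of `S(x)` differ by the null sequence `∑_{n ≤ m} Λ_n(x)`. -/

lemma dl_succ (l : ℕ → ℝ) (n : ℕ) : dl l (n + 1) = l (n + 1) - l n := by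
  simp [dl]

lemma sum_dl_mul_add_sum_mul_sub (l : ℕ → ℝ) (x : ℕ → ℂ) (n : ℕ) :
    ∑ k ∈ Finset.range (n + 1), ((dl l k : ℝ) : ℂ) * x k
      + ∑ k ∈ Finset.Icc 1 n, (l (k - 1) : ℂ) * (x k - x (k - 1)) = l n * x n := by
  induction n with
  | zero => simp [dl]
  | succ n ih =>
    rw [Finset.sum_range_succ, Finset.sum_Icc_succ_top (by omega), dl_succ, Nat.add_sub_cancel, Complex.ofReal_sub]
    linear_combination ih

lemma LamT_add_Sop (l : ℕ → ℝ) (x : ℕ → ℂ) {n : ℕ} (hn : l n ≠ 0) :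
    LamT l x n + Sop l x n = x n := by
  have hn' : (l n : ℂ) ≠ 0 := Complex.ofReal_ne_zero.mpr hn
  rcases Nat.eq_zero_or_pos n with rfl | hpos
  · simp [LamT, Sop, dl]
    field_simp
  · rw [LamT, Sop, if_neg hpos.ne', ← mul_add, sum_dl_mul_add_sum_mul_sub]
    field_simp

lemma sum_range_eq_sum_LamT_add_sum_Sop (l : ℕ → ℝ) (hl : ∀ n, l n ≠ 0) (x : ℕ → ℂ) (m : ℕ) :
    ∑ k ∈ Finset.range (m + 1), x k
      = ∑ n ∈ Finset.range (m + 1), LamT l x n + ∑ n ∈ Finset.range (m + 1), Sop l x n := by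
  rw [← Finset.sum_add_distrib]
  exact Finset.sum_congr rfl fun n _ => (LamT_add_Sop l x (hl n)).symm

theorem stmt7_general (l : ℕ → ℝ) (hmono : StrictMono l) (hpos : 0 < l 0) :
    (∀ x ∈ cs0Lam l, Tendsto (fun m => ∑ k ∈ Finset.range (m + 1), x k) atTop (𝓝 0)) ↔
    (∀ x ∈ cs0Lam l, Tendsto (fun m => ∑ n ∈ Finset.range (m + 1), Sop l x n) atTop (𝓝 0)) := by
  have hl : ∀ n, l n ≠ 0 := fun n => (hpos.trans_le (hmono.monotone n.zero_le)).ne'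
  refine forall₂_congr fun x (hx : Tendsto _ _ _) => ⟨fun h => ?_, fun h => ?_⟩
  all_goals simp only [funext (sum_range_eq_sum_LamT_add_sum_Sop l hl x)] at h ⊢
  · simpa using h.sub hx
  · simpa using hx.add h

theorem stmt7 (l : ℕ → ℝ) (hmono : StrictMono l) (hpos : 0 < l 0)
    (hlim : Tendsto l atTop atTop) :
    (∀ x ∈ cs0Lam l, Tendsto (fun m => ∑ k ∈ Finset.range (m + 1), x k) atTop (𝓝 0)) ↔
    (∀ x ∈ cs0Lam l, Tendsto (fun m => ∑ n ∈ Finset.range (m + 1), Sop l x n) atTop (𝓝 0)) :=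
  stmt7_general l hmono hpos
end

section
/- The spaces cs^λ and cs₀^λ are separable with respect to the norm ‖·‖_{bs^λ}: there exists a countable set D ⊆ cs^λ such that for every x ∈ cs^λ and every ε > 0 there is d ∈ D with ‖x − d‖_{bs^λ} < ε, and likewise for cs₀^λ. -/
/-!
Write `S_m(x) = ∑_{n ≤ m} Λ_n(x)`. Since `λ_n ≠ 0` and `λ_n - λ_{n-1} ≠ 0`, the map `x ↦ S(x)` is a
linear bijection of `ℕ → ℂ`: `Λ_n(x) = y_n - y_{n-1}` is solved by
`x_n = (λ_n Δy_n - λ_{n-1} Δy_{n-1}) / (λ_n - λ_{n-1})`. It carries `cs^λ` onto the convergent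
sequences, `cs₀^λ` onto the null sequences, and `‖·‖_{bs^λ}` onto the sup norm. So it suffices that
sequences which are eventually constant, with all values in a countable dense subset of `ℂ`, are dense
in `c` and in `c₀` for the sup norm.
-/

open Filter Topology

/-- The norm `‖x‖_{bs^λ} = sup_m |∑_{n=0}^m Λ_n(x)|`. -/
noncomputable def bsLamNorm (l : ℕ → ℝ) (x : ℕ → ℂ) : ℝ :=
  ⨆ m, ‖∑ n ∈ Finset.range (m + 1), LamT l x n‖

open Finset

/-- Backward differences, with the convention `f (-1) = 0`. -/
def backDiff {G : Type*} [AddCommGroup G] (f : ℕ → G) (n : ℕ) : G :=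
  f n - if n = 0 then 0 else f (n - 1)

lemma sum_range_succ_backDiff {G : Type*} [AddCommGroup G] (f : ℕ → G) (n : ℕ) :
    ∑ k ∈ range (n + 1), backDiff f k = f n := by
  induction n with
  | zero => simp [backDiff]
  | succ n ih => rw [sum_range_succ, ih, backDiff, if_neg n.succ_ne_zero, Nat.add_sub_cancel,
      add_sub_cancel]

noncomputable def lamSum (l : ℕ → ℝ) (x : ℕ → ℂ) (m : ℕ) : ℂ :=
  ∑ n ∈ range (m + 1), LamT l x n

lemma lamSum_sub (l : ℕ → ℝ) (x d : ℕ → ℂ) (m : ℕ) :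
    lamSum l (fun k => x k - d k) m = lamSum l x m - lamSum l d m := by
  simp only [lamSum, LamT, mul_sub, sum_sub_distrib]

noncomputable def lamInv (l : ℕ → ℝ) (y : ℕ → ℂ) (k : ℕ) : ℂ :=
  backDiff (fun n => (l n : ℂ) * backDiff y n) k / (dl l k : ℂ)

section Inverse

variable {l : ℕ → ℝ} (hl : ∀ n, l n ≠ 0) (hdl : ∀ n, dl l n ≠ 0)
include hdl

lemma sum_dl_mul_lamInv (y : ℕ → ℂ) (n : ℕ) :
    ∑ k ∈ range (n + 1), (dl l k : ℂ) * lamInv l y k = l n * backDiff y n := by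
  simp_rw [lamInv, mul_div_cancel₀ _ (Complex.ofReal_ne_zero.mpr (hdl _))]
  exact sum_range_succ_backDiff (fun n => (l n : ℂ) * backDiff y n) n

include hl

lemma LamT_lamInv (y : ℕ → ℂ) (n : ℕ) : LamT l (lamInv l y) n = backDiff y n := by
  rw [LamT, sum_dl_mul_lamInv hdl, one_div, inv_mul_cancel_left₀ (Complex.ofReal_ne_zero.mpr (hl n))]

lemma lamSum_lamInv (y : ℕ → ℂ) : lamSum l (lamInv l y) = y := by
  ext m
  simp only [lamSum, LamT_lamInv hl hdl, sum_range_succ_backDiff]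

lemma bsLamNorm_sub_lamInv_le {x y : ℕ → ℂ} {C : ℝ} (h : ∀ m, dist (lamSum l x m) (y m) ≤ C) :
    bsLamNorm l (fun k => x k - lamInv l y k) ≤ C :=
  ciSup_le fun m => show ‖lamSum l _ m‖ ≤ C by
    rw [lamSum_sub, lamSum_lamInv hl hdl, ← dist_eq_norm]
    exact h m

lemma lamInv_mem_csLam {y : ℕ → ℂ} {L : ℂ} (hy : Tendsto y atTop (𝓝 L)) :
    lamInv l y ∈ csLam l :=
  ⟨L, show Tendsto (lamSum l (lamInv l y)) atTop (𝓝 L) by rwa [lamSum_lamInv hl hdl]⟩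

lemma lamInv_mem_cs0Lam {y : ℕ → ℂ} (hy : Tendsto y atTop (𝓝 0)) : lamInv l y ∈ cs0Lam l :=
  show Tendsto (lamSum l (lamInv l y)) atTop (𝓝 0) by rwa [lamSum_lamInv hl hdl]

end Inverse

lemma dl_pos_of_strictMono {l : ℕ → ℝ} (hmono : StrictMono l) (hpos : 0 < l 0) (n : ℕ) :
    0 < dl l n := by
  rcases n with _ | n
  · simpa [dl] using hpos
  · simpa [dl] using hmono n.lt_succ_self

def patch {α : Type*} {T : Set α} (a : α) (p : Σ N : ℕ, Fin N → T) (n : ℕ) : α :=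
  if h : n < p.1 then p.2 ⟨n, h⟩ else a

lemma tendsto_patch {α : Type*} [TopologicalSpace α] {T : Set α} (a : α) (p : Σ N : ℕ, Fin N → T) :
    Tendsto (patch a p) atTop (𝓝 a) :=
  tendsto_const_nhds.congr' <| (eventually_ge_atTop p.1).mono fun _ hn => by
    simp [patch, not_lt.mpr hn]

section Approximation

variable {α : Type*} [PseudoMetricSpace α] {T : Set α} {s : ℕ → α} {ε : ℝ}

lemma exists_patch_dist_lt (hT : Dense T) (hε : 0 < ε) {a : α}
    (hs : ∀ᶠ m in atTop, dist (s m) a < ε) :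
    ∃ p : Σ N : ℕ, Fin N → T, ∀ m, dist (s m) (patch a p m) < ε := by
  obtain ⟨N, hN⟩ := eventually_atTop.mp hs
  choose t htT ht using fun i : Fin N => hT.exists_dist_lt (s i) hε
  refine ⟨⟨N, fun i => ⟨t i, htT i⟩⟩, fun m => ?_⟩
  by_cases hm : m < N
  · simpa [patch, hm] using ht ⟨m, hm⟩
  · simpa [patch, hm] using hN m (not_lt.mp hm)

lemma exists_patch_dist_lt_of_tendsto (hT : Dense T) (hε : 0 < ε) {L : α}
    (hs : Tendsto s atTop (𝓝 L)) :
    ∃ a ∈ T, ∃ p : Σ N : ℕ, Fin N → T, ∀ m, dist (s m) (patch a p m) < ε := by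
  obtain ⟨a, haT, hLa⟩ := hT.exists_dist_lt L (half_pos hε)
  have hsa : ∀ᶠ m in atTop, dist (s m) a < ε :=
    (Metric.tendsto_nhds.mp hs _ (half_pos hε)).mono fun m hm =>
      calc dist (s m) a ≤ dist (s m) L + dist L a := dist_triangle _ _ _
        _ < ε / 2 + ε / 2 := add_lt_add hm hLa
        _ = ε := add_halves ε
  exact ⟨a, haT, exists_patch_dist_lt hT hε hsa⟩

end Approximation

theorem stmt11_general (l : ℕ → ℝ) (hmono : StrictMono l) (hpos : 0 < l 0) :
    (∃ D : Set (ℕ → ℂ), D.Countable ∧ D ⊆ csLam l ∧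
      ∀ x ∈ csLam l, ∀ ε > (0 : ℝ), ∃ d ∈ D, bsLamNorm l (fun k => x k - d k) < ε) ∧
    (∃ D : Set (ℕ → ℂ), D.Countable ∧ D ⊆ cs0Lam l ∧
      ∀ x ∈ cs0Lam l, ∀ ε > (0 : ℝ), ∃ d ∈ D, bsLamNorm l (fun k => x k - d k) < ε) := by
  have hdl n := (dl_pos_of_strictMono hmono hpos n).ne'
  have hl n : l n ≠ 0 := (hpos.trans_le (hmono.monotone n.zero_le)).ne'
  obtain ⟨T, hTc, hTd⟩ := TopologicalSpace.exists_countable_dense ℂ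
  have := hTc.to_subtype
  refine ⟨⟨Set.range fun q : T × Σ N : ℕ, Fin N → T => lamInv l (patch (q.1 : ℂ) q.2),
      Set.countable_range _, ?_, ?_⟩,
    ⟨Set.range fun p : Σ N : ℕ, Fin N → T => lamInv l (patch 0 p), Set.countable_range _, ?_, ?_⟩⟩
  · rintro _ ⟨q, rfl⟩
    exact lamInv_mem_csLam hl hdl (tendsto_patch _ q.2)
  · rintro x ⟨L, hL⟩ ε hε
    obtain ⟨a, haT, p, hp⟩ := exists_patch_dist_lt_of_tendsto hTd (half_pos hε) hL
    exact ⟨_, ⟨(⟨a, haT⟩, p), rfl⟩,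
      (bsLamNorm_sub_lamInv_le hl hdl fun m => (hp m).le).trans_lt (half_lt_self hε)⟩
  · rintro _ ⟨p, rfl⟩
    exact lamInv_mem_cs0Lam hl hdl (tendsto_patch 0 p)
  · intro x hx ε hε
    obtain ⟨p, hp⟩ := exists_patch_dist_lt hTd (half_pos hε)
      (Metric.tendsto_nhds.mp hx _ (half_pos hε))
    exact ⟨_, ⟨p, rfl⟩,
      (bsLamNorm_sub_lamInv_le hl hdl fun m => (hp m).le).trans_lt (half_lt_self hε)⟩

theorem stmt11 (l : ℕ → ℝ) (hmono : StrictMono l) (hpos : 0 < l 0)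
    (hlim : Tendsto l atTop atTop) :
    (∃ D : Set (ℕ → ℂ), D.Countable ∧ D ⊆ csLam l ∧
      ∀ x ∈ csLam l, ∀ ε > (0 : ℝ), ∃ d ∈ D, bsLamNorm l (fun k => x k - d k) < ε) ∧
    (∃ D : Set (ℕ → ℂ), D.Countable ∧ D ⊆ cs0Lam l ∧
      ∀ x ∈ cs0Lam l, ∀ ε > (0 : ℝ), ∃ d ∈ D, bsLamNorm l (fun k => x k - d k) < ε) :=
  stmt11_general l hmono hpos
end

section
/- A sequence a : ℕ → ℂ belongs to the α-dual of cs₀^λ, and equivalently to the α-dual of bs^λ (i.e. ∑_k |a_k·x_k| < ∞ for every x in the respective space), if and only if sup over all finite sets N, K ⊆ ℕ of |∑_{n∈N} ∑_{k∈K} (b_{nk} − b_{n,k+1})| is finite, where b_{nk} = (−1)^{n−k}·λ_k/(λ_n − λ_{n−1})·a_n if n−1 ≤ k ≤ n and b_{nk} = 0 otherwise. -/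
/-!
All three conditions are equivalent to `∑ λ_n |a_n| / (λ_n - λ_{n-1}) < ∞`. The map `x ↦ Λ(x)` is
inverted by `(λ_n - λ_{n-1}) x_n = λ_n Λ_n - λ_{n-1} Λ_{n-1}`, so bounded partial sums of `Λ(x)`
force `|x_n| ≤ 4C λ_n / (λ_n - λ_{n-1})`; conversely a gliding hump produces `x ∈ cs₀^λ` against
which `a` is not absolutely summable. In the matrix condition only the entries
`b_{nk} - b_{n,k+1}` with `n - 2 ≤ k ≤ n` survive, and the diagonal ones have modulus exactly that
weight.
-/
open Filter Topology

/-- The matrix `B^λ = (b_{nk})` associated with the sequence `a`: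
`b_{nk} = (-1)^{n-k} λ_k/(λ_n - λ_{n-1}) a_n` if `n-1 ≤ k ≤ n`, and `0` otherwise. -/
noncomputable def Bmat (l : ℕ → ℝ) (a : ℕ → ℂ) (n k : ℕ) : ℂ :=
  if n ≤ k + 1 ∧ k ≤ n then (-1 : ℂ) ^ (n - k) * (l k : ℂ) / ((dl l n : ℝ) : ℂ) * a n else 0

open Finset

def bwdDiff {M : Type*} [AddCommGroup M] (s : ℕ → M) (n : ℕ) : M :=
  s n - if n = 0 then 0 else s (n - 1)

section bwdDiff

variable {M : Type*}

theorem bwdDiff_sum_range_succ [AddCommGroup M] (f : ℕ → M) (n : ℕ) :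
    bwdDiff (fun m => ∑ k ∈ range (m + 1), f k) n = f n := by
  cases n <;> simp [bwdDiff, sum_range_succ]

theorem sum_range_succ_bwdDiff [AddCommGroup M] (s : ℕ → M) (m : ℕ) :
    ∑ n ∈ range (m + 1), bwdDiff s n = s m := by
  induction m with
  | zero => simp [bwdDiff]
  | succ m ih => rw [sum_range_succ, ih]; simp [bwdDiff]

theorem norm_bwdDiff_le [SeminormedAddCommGroup M] (s : ℕ → M) (n : ℕ) :
    ‖bwdDiff s n‖ ≤ ‖s n‖ + ‖s (n - 1)‖ := by
  unfold bwdDiff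
  split_ifs
  · simp
  · exact norm_sub_le _ _

theorem bwdDiff_mul_bwdDiff_of_support_mod_three [Ring M] (c s : ℕ → M) {n : ℕ}
    (hs : ∀ k, k % 3 ≠ n % 3 → s k = 0) :
    bwdDiff (fun k => c k * bwdDiff s k) n = c n * s n := by
  rcases n with _ | _ | n
  · simp [bwdDiff]
  · simp [bwdDiff, hs 0 (by omega)]
  · simp [bwdDiff, hs (n + 1) (by omega), hs n (by omega)]

theorem norm_le_two_mul_of_forall_norm_sum_range_le [SeminormedAddCommGroup M] {f : ℕ → M}
    {C : ℝ} (h : ∀ m, ‖∑ n ∈ range (m + 1), f n‖ ≤ C) (n : ℕ) : ‖f n‖ ≤ 2 * C := by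
  rw [← bwdDiff_sum_range_succ f n]
  linarith [norm_bwdDiff_le (fun m => ∑ k ∈ range (m + 1), f k) n, h n, h (n - 1)]

end bwdDiff

theorem summable_of_forall_summable_mod {E : Type*} [AddCommMonoid E] [TopologicalSpace E]
    [ContinuousAdd E] {f : ℕ → E} {p : ℕ} (hp : 0 < p)
    (h : ∀ r < p, Summable fun n => if n % p = r then f n else 0) : Summable f := by
  have := summable_sum (s := range p) (f := fun r n => if n % p = r then f n else 0)
    fun r hr => h r (mem_range.1 hr)
  simpa [sum_ite_eq, Nat.mod_lt _ hp] using this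

theorem Finset.sum_abs_le_two_mul_of_forall_subset {ι : Type*} {f : ι → ℝ} {T : Finset ι}
    {C : ℝ} (h : ∀ S ⊆ T, |∑ i ∈ S, f i| ≤ C) : ∑ i ∈ T, |f i| ≤ 2 * C := by
  have hnonneg := h _ (filter_subset (fun i => 0 ≤ f i) T)
  have hneg := h _ (filter_subset (fun i => ¬ 0 ≤ f i) T)
  rw [← sum_filter_add_sum_filter_not T (fun i => 0 ≤ f i),
    sum_congr rfl fun i hi => abs_of_nonneg (mem_filter.1 hi).2,
    sum_congr rfl fun i hi => abs_of_neg (not_le.1 (mem_filter.1 hi).2), sum_neg_distrib]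
  linarith [le_abs_self (∑ i ∈ T with 0 ≤ f i, f i), neg_abs_le (∑ i ∈ T with ¬ 0 ≤ f i, f i)]

theorem Complex.sum_norm_le_four_mul_of_forall_subset {ι : Type*} {z : ι → ℂ} {T : Finset ι}
    {C : ℝ} (h : ∀ S ⊆ T, ‖∑ i ∈ S, z i‖ ≤ C) : ∑ i ∈ T, ‖z i‖ ≤ 4 * C := by
  have hre : ∑ i ∈ T, |(z i).re| ≤ 2 * C := sum_abs_le_two_mul_of_forall_subset fun S hS => by
    rw [← Complex.re_sum]; exact (abs_re_le_norm _).trans (h S hS)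
  have him : ∑ i ∈ T, |(z i).im| ≤ 2 * C := sum_abs_le_two_mul_of_forall_subset fun S hS => by
    rw [← Complex.im_sum]; exact (abs_im_le_norm _).trans (h S hS)
  calc ∑ i ∈ T, ‖z i‖ ≤ ∑ i ∈ T, (|(z i).re| + |(z i).im|) :=
        sum_le_sum fun i _ => norm_le_abs_re_add_abs_im _
    _ ≤ 4 * C := by rw [sum_add_distrib]; linarith

-- Abel–Dini: `t n = (1 + G n)⁻¹` with `G n = ∑_{j<n} g j`, and `∑_{j<m} g j t j ≥ log (1 + G m)`.
theorem exists_tendsto_zero_not_summable_mul {g : ℕ → ℝ} (hg : 0 ≤ g) (h : ¬ Summable g) :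
    ∃ t : ℕ → ℝ, 0 ≤ t ∧ Tendsto t atTop (𝓝 0) ∧ ¬ Summable fun n => g n * t n := by
  set G : ℕ → ℝ := fun n => ∑ j ∈ range n, g j
  have hG : Tendsto G atTop atTop := (not_summable_iff_tendsto_nat_atTop_of_nonneg hg).1 h
  have hG1 : ∀ n, 0 < 1 + G n := fun n => by
    have : 0 ≤ G n := sum_nonneg fun j _ => hg j
    linarith
  have hstep : ∀ n, Real.log (1 + G (n + 1)) - Real.log (1 + G n) ≤ g n * (1 + G n)⁻¹ := by
    intro n
    have hGs : G (n + 1) = G n + g n := sum_range_succ g n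
    have := Real.log_le_sub_one_of_pos (div_pos (hG1 (n + 1)) (hG1 n))
    rw [Real.log_div (hG1 (n + 1)).ne' (hG1 n).ne'] at this
    convert this using 1
    rw [hGs, div_sub_one (hG1 n).ne']
    ring
  refine ⟨fun n => (1 + G n)⁻¹, fun n => (inv_pos.2 (hG1 n)).le,
    (tendsto_atTop_add_const_left _ 1 hG).inv_tendsto_atTop, fun hsum => ?_⟩
  have hlog : ∀ m, Real.log (1 + G m) ≤ ∑ n ∈ range m, g n * (1 + G n)⁻¹ := fun m => by
    have := sum_le_sum fun n (_ : n ∈ range m) => hstep n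
    rwa [sum_range_sub (fun n => Real.log (1 + G n)), show G 0 = 0 from sum_range_zero g,
      add_zero, Real.log_one, sub_zero] at this
  exact (not_summable_iff_tendsto_nat_atTop_of_nonneg fun n =>
    mul_nonneg (hg n) (inv_pos.2 (hG1 n)).le).2
    (tendsto_atTop_mono hlog (Real.tendsto_log_atTop.comp
      (tendsto_atTop_add_const_left _ 1 hG))) hsum

section Lambda

variable {l : ℕ → ℝ}

theorem ofReal_mul_LamT (x : ℕ → ℂ) {n : ℕ} (hn : l n ≠ 0) :
    (l n : ℂ) * LamT l x n = ∑ k ∈ range (n + 1), (dl l k : ℂ) * x k := by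
  rw [LamT, ← mul_assoc, mul_one_div_cancel (Complex.ofReal_ne_zero.2 hn), one_mul]

theorem ofReal_dl_mul_eq_bwdDiff (hl : ∀ n, l n ≠ 0) (x : ℕ → ℂ) (n : ℕ) :
    (dl l n : ℂ) * x n = bwdDiff (fun k => (l k : ℂ) * LamT l x k) n := by
  simp_rw [ofReal_mul_LamT x (hl _)]
  exact (bwdDiff_sum_range_succ (fun k => (dl l k : ℂ) * x k) n).symm

theorem LamT_bwdDiff_div_dl (hl : ∀ n, l n ≠ 0) (hdl : ∀ n, dl l n ≠ 0) (y : ℕ → ℂ) (n : ℕ) :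
    LamT l (fun k => bwdDiff (fun j => (l j : ℂ) * y j) k / dl l k) n = y n := by
  refine mul_left_cancel₀ (Complex.ofReal_ne_zero.2 (hl n)) ?_
  simp_rw [ofReal_mul_LamT _ (hl n), mul_div_cancel₀ _ (Complex.ofReal_ne_zero.2 (hdl _))]
  exact sum_range_succ_bwdDiff _ n

theorem sum_range_succ_LamT_eq (hl : ∀ n, l n ≠ 0) (hdl : ∀ n, dl l n ≠ 0) (s : ℕ → ℂ) (m : ℕ) :
    ∑ n ∈ range (m + 1),
      LamT l (fun k => bwdDiff (fun j => (l j : ℂ) * bwdDiff s j) k / dl l k) n = s m := by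
  simp_rw [LamT_bwdDiff_div_dl hl hdl]
  exact sum_range_succ_bwdDiff s m

variable (hmono : StrictMono l) (hpos : 0 < l 0)
include hmono hpos

theorem l_pos (n : ℕ) : 0 < l n := hpos.trans_le (hmono.monotone n.zero_le)

theorem dl_pos_s13 (n : ℕ) : 0 < dl l n := by
  unfold dl
  split_ifs with hn
  · simpa [hn] using hpos
  · exact sub_pos.2 (hmono (Nat.sub_lt (Nat.pos_of_ne_zero hn) one_pos))

end Lambda

noncomputable def dualWeight (l : ℕ → ℝ) (a : ℕ → ℂ) (n : ℕ) : ℝ := l n * ‖a n‖ / dl l n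

section Bmat

variable {l : ℕ → ℝ} (hmono : StrictMono l) (hpos : 0 < l 0) (a : ℕ → ℂ)
include hmono hpos

theorem dualWeight_nonneg (n : ℕ) : 0 ≤ dualWeight l a n :=
  div_nonneg (mul_nonneg (l_pos hmono hpos n).le (norm_nonneg _)) (dl_pos_s13 hmono hpos n).le

theorem norm_Bmat_le (n k : ℕ) : ‖Bmat l a n k‖ ≤ dualWeight l a n := by
  unfold Bmat
  split_ifs with hnk
  · rw [norm_mul, norm_div, norm_mul, norm_pow, norm_neg, norm_one, one_pow, one_mul,
      Complex.norm_real, Complex.norm_real, Real.norm_of_nonneg (l_pos hmono hpos k).le,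
      Real.norm_of_nonneg (dl_pos_s13 hmono hpos n).le, dualWeight, div_mul_eq_mul_div]
    gcongr
    · exact (dl_pos_s13 hmono hpos n).le
    · exact hmono.monotone hnk.2
  · simpa using dualWeight_nonneg hmono hpos a n

theorem norm_Bmat_self_sub_succ (n : ℕ) :
    ‖Bmat l a n n - Bmat l a n (n + 1)‖ = dualWeight l a n := by
  rw [Bmat, Bmat, if_pos (by omega), if_neg (by omega), sub_zero, Nat.sub_self, pow_zero,
    one_mul, norm_mul, norm_div, Complex.norm_real, Complex.norm_real,
    Real.norm_of_nonneg (l_pos hmono hpos n).le, Real.norm_of_nonneg (dl_pos_s13 hmono hpos n).le,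
    dualWeight, div_mul_eq_mul_div]

theorem norm_sum_Bmat_le (K : Finset ℕ) (n : ℕ) :
    ‖∑ k ∈ K, Bmat l a n k‖ ≤ 2 * dualWeight l a n := by
  rw [← sum_filter_of_ne (p := (· ∈ Icc (n - 1) n)) fun k _ hk => ?_]
  · have hcard : (K.filter (· ∈ Icc (n - 1) n)).card ≤ 2 :=
      (card_le_card fun k hk => (mem_filter.1 hk).2).trans (by simp; omega)
    calc ‖∑ k ∈ K with k ∈ Icc (n - 1) n, Bmat l a n k‖
        ≤ ∑ k ∈ K with k ∈ Icc (n - 1) n, ‖Bmat l a n k‖ := norm_sum_le _ _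
      _ ≤ (K.filter (· ∈ Icc (n - 1) n)).card • dualWeight l a n :=
          sum_le_card_nsmul _ _ _ fun k _ => norm_Bmat_le hmono hpos a n k
      _ ≤ 2 * dualWeight l a n := by
          rw [nsmul_eq_mul]
          gcongr
          · exact dualWeight_nonneg hmono hpos a n
          · exact_mod_cast hcard
  · by_contra hnk
    exact hk (if_neg (by simpa using hnk))

theorem norm_sum_Bmat_sub_succ_le (K : Finset ℕ) (n : ℕ) :
    ‖∑ k ∈ K, (Bmat l a n k - Bmat l a n (k + 1))‖ ≤ 4 * dualWeight l a n := by
  set K' := K.map (addRightEmbedding 1)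
  have hshift : ∑ k ∈ K, Bmat l a n (k + 1) = ∑ k ∈ K', Bmat l a n k := by rw [sum_map]; rfl
  rw [sum_sub_distrib, hshift]
  linarith [norm_sub_le (∑ k ∈ K, Bmat l a n k) (∑ k ∈ K', Bmat l a n k),
    norm_sum_Bmat_le hmono hpos a K n, norm_sum_Bmat_le hmono hpos a K' n]

end Bmat

theorem cs0Lam_subset_bsLam (l : ℕ → ℝ) : cs0Lam l ⊆ bsLam l := fun _ hx => by
  obtain ⟨C, hC⟩ := (Tendsto.norm hx).bddAbove_range
  exact ⟨C, fun m => hC ⟨m, rfl⟩⟩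

section Duals

variable {l : ℕ → ℝ} (hmono : StrictMono l) (hpos : 0 < l 0) {a : ℕ → ℂ}
include hmono hpos

theorem exists_bound_of_summable_dualWeight (hw : Summable (dualWeight l a)) :
    ∃ C : ℝ, ∀ N K : Finset ℕ, ‖∑ n ∈ N, ∑ k ∈ K, (Bmat l a n k - Bmat l a n (k + 1))‖ ≤ C := by
  refine ⟨4 * ∑' n, dualWeight l a n, fun N K => ?_⟩
  calc ‖∑ n ∈ N, ∑ k ∈ K, (Bmat l a n k - Bmat l a n (k + 1))‖
      ≤ ∑ n ∈ N, 4 * dualWeight l a n :=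
        (norm_sum_le _ _).trans (sum_le_sum fun n _ => norm_sum_Bmat_sub_succ_le hmono hpos a K n)
    _ ≤ 4 * ∑' n, dualWeight l a n := by
        rw [← mul_sum]
        gcongr
        exact hw.sum_le_tsum N fun n _ => dualWeight_nonneg hmono hpos a n

-- On a set of indices at mutual distance `≥ 3`, the double sum keeps only the diagonal terms.
theorem summable_dualWeight_of_bound {C : ℝ}
    (hC : ∀ N K : Finset ℕ, ‖∑ n ∈ N, ∑ k ∈ K, (Bmat l a n k - Bmat l a n (k + 1))‖ ≤ C) :
    Summable (dualWeight l a) := by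
  refine summable_of_forall_summable_mod three_pos fun r _ => summable_of_sum_le
    (c := 4 * C) (fun n => by split_ifs <;> simp [dualWeight_nonneg hmono hpos a n]) fun u => ?_
  rw [← sum_filter]
  have hdiag : ∀ S ⊆ u.filter (· % 3 = r),
      ‖∑ n ∈ S, (Bmat l a n n - Bmat l a n (n + 1))‖ ≤ C := fun S hS => by
    convert hC S S using 2
    refine sum_congr rfl fun n hn => (sum_eq_single_of_mem
      (f := fun k => Bmat l a n k - Bmat l a n (k + 1)) n hn fun k hk hkn => ?_).symm
    have hn3 := (mem_filter.1 (hS hn)).2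
    have hk3 := (mem_filter.1 (hS hk)).2
    rw [Bmat, Bmat, if_neg (by omega), if_neg (by omega), sub_zero]
  simpa [norm_Bmat_self_sub_succ hmono hpos a] using
    Complex.sum_norm_le_four_mul_of_forall_subset hdiag

theorem summable_norm_mul_of_mem_bsLam (hw : Summable (dualWeight l a)) {x : ℕ → ℂ}
    (hx : x ∈ bsLam l) : Summable fun k => ‖a k * x k‖ := by
  obtain ⟨C, hC⟩ := hx
  have hLam := norm_le_two_mul_of_forall_norm_sum_range_le hC
  have hx_le (n : ℕ) : dl l n * ‖x n‖ ≤ 4 * C * l n := by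
    have hterm (m : ℕ) (hm : m ≤ n) : ‖(l m : ℂ) * LamT l x m‖ ≤ l n * (2 * C) := by
      rw [norm_mul, Complex.norm_real, Real.norm_of_nonneg (l_pos hmono hpos m).le]
      exact mul_le_mul (hmono.monotone hm) (hLam m) (norm_nonneg _) (l_pos hmono hpos n).le
    calc dl l n * ‖x n‖ = ‖(dl l n : ℂ) * x n‖ := by
          rw [norm_mul, Complex.norm_real, Real.norm_of_nonneg (dl_pos_s13 hmono hpos n).le]
      _ ≤ ‖(l n : ℂ) * LamT l x n‖ + ‖(l (n - 1) : ℂ) * LamT l x (n - 1)‖ := by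
          rw [ofReal_dl_mul_eq_bwdDiff fun n => (l_pos hmono hpos n).ne']
          exact norm_bwdDiff_le _ n
      _ ≤ 4 * C * l n := by linarith [hterm n le_rfl, hterm (n - 1) (Nat.sub_le n 1)]
  refine (hw.mul_left (4 * C)).of_nonneg_of_le (fun _ => norm_nonneg _) fun n => ?_
  have hxn : ‖x n‖ ≤ 4 * C * l n / dl l n := (le_div_iff₀' (dl_pos_s13 hmono hpos n)).2 (hx_le n)
  calc ‖a n * x n‖ = ‖a n‖ * ‖x n‖ := norm_mul _ _
    _ ≤ ‖a n‖ * (4 * C * l n / dl l n) := by gcongr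
    _ = 4 * C * dualWeight l a n := by rw [dualWeight]; ring

/-- Gliding hump: if the weights are not summable, neither are they on some residue class mod `3`;
choosing the partial sums of `Λ(x)` to be a null sequence `s` supported on that class gives
`‖a n * x n‖ = dualWeight l a n * ‖s n‖` there. -/
theorem summable_dualWeight_of_forall_mem_cs0Lam
    (h : ∀ x ∈ cs0Lam l, Summable fun k => ‖a k * x k‖) : Summable (dualWeight l a) := by
  by_contra hw
  obtain ⟨r, -, hr⟩ : ∃ r < 3, ¬ Summable fun n => if n % 3 = r then dualWeight l a n else 0 := by
    by_contra! hall
    exact hw (summable_of_forall_summable_mod three_pos hall)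
  set g : ℕ → ℝ := fun n => if n % 3 = r then dualWeight l a n else 0
  have hg : 0 ≤ g := fun n => by
    simp only [g, Pi.zero_apply]; split_ifs <;> simp [dualWeight_nonneg hmono hpos a n]
  obtain ⟨t, ht0, ht, hgt⟩ := exists_tendsto_zero_not_summable_mul hg hr
  set s : ℕ → ℂ := fun n => if n % 3 = r then (t n : ℂ) else 0
  set x : ℕ → ℂ := fun n => bwdDiff (fun k => (l k : ℂ) * bwdDiff s k) n / dl l n
  have hx : x ∈ cs0Lam l := by
    refine (tendsto_congr (sum_range_succ_LamT_eq (fun n => (l_pos hmono hpos n).ne')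
      (fun n => (dl_pos_s13 hmono hpos n).ne') s)).2 (squeeze_zero_norm (fun m => ?_) ht)
    simp only [s]
    split_ifs
    · rw [Complex.norm_real, Real.norm_of_nonneg (ht0 m)]
    · rw [norm_zero]
      exact ht0 m
  refine hgt ((h x hx).of_nonneg_of_le (fun n => mul_nonneg (hg n) (ht0 n)) fun n => ?_)
  by_cases hn : n % 3 = r
  · have hxn : x n = l n * t n / dl l n := by
      simp only [x]
      rw [bwdDiff_mul_bwdDiff_of_support_mod_three _ _ fun k hk => if_neg (hn ▸ hk)]
      simp [hn]
    rw [hxn, norm_mul, norm_div, norm_mul, Complex.norm_real, Complex.norm_real, Complex.norm_real,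
      Real.norm_of_nonneg (l_pos hmono hpos n).le, Real.norm_of_nonneg (ht0 n),
      Real.norm_of_nonneg (dl_pos_s13 hmono hpos n).le]
    simp only [g, hn, if_true, dualWeight]
    apply le_of_eq
    ring
  · simp only [g, hn, if_false, zero_mul]
    exact norm_nonneg _

end Duals

theorem stmt13_general (l : ℕ → ℝ) (hmono : StrictMono l) (hpos : 0 < l 0)
    (a : ℕ → ℂ) :
    ((∀ x ∈ cs0Lam l, Summable fun k => ‖a k * x k‖) ↔
      (∃ C : ℝ, ∀ N K : Finset ℕ,
        ‖∑ n ∈ N, ∑ k ∈ K, (Bmat l a n k - Bmat l a n (k + 1))‖ ≤ C)) ∧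
    ((∀ x ∈ bsLam l, Summable fun k => ‖a k * x k‖) ↔
      (∃ C : ℝ, ∀ N K : Finset ℕ,
        ‖∑ n ∈ N, ∑ k ∈ K, (Bmat l a n k - Bmat l a n (k + 1))‖ ≤ C)) := by
  have hbs (hw : Summable (dualWeight l a)) : ∀ x ∈ bsLam l, Summable fun k => ‖a k * x k‖ :=
    fun _ hx => summable_norm_mul_of_mem_bsLam hmono hpos hw hx
  have hcs0 := summable_dualWeight_of_forall_mem_cs0Lam hmono hpos (a := a)
  have hsub := cs0Lam_subset_bsLam l
  have hB : Summable (dualWeight l a) ↔ ∃ C : ℝ, ∀ N K : Finset ℕ,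
      ‖∑ n ∈ N, ∑ k ∈ K, (Bmat l a n k - Bmat l a n (k + 1))‖ ≤ C :=
    ⟨exists_bound_of_summable_dualWeight hmono hpos,
      fun ⟨_, hC⟩ => summable_dualWeight_of_bound hmono hpos hC⟩
  rw [← hB]
  exact ⟨⟨hcs0, fun hw x hx => hbs hw x (hsub hx)⟩,
    ⟨fun h => hcs0 fun x hx => h x (hsub hx), hbs⟩⟩

theorem stmt13 (l : ℕ → ℝ) (hmono : StrictMono l) (hpos : 0 < l 0)
    (hlim : Tendsto l atTop atTop) (a : ℕ → ℂ) :
    ((∀ x ∈ cs0Lam l, Summable fun k => ‖a k * x k‖) ↔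
      (∃ C : ℝ, ∀ N K : Finset ℕ,
        ‖∑ n ∈ N, ∑ k ∈ K, (Bmat l a n k - Bmat l a n (k + 1))‖ ≤ C)) ∧
    ((∀ x ∈ bsLam l, Summable fun k => ‖a k * x k‖) ↔
      (∃ C : ℝ, ∀ N K : Finset ℕ,
        ‖∑ n ∈ N, ∑ k ∈ K, (Bmat l a n k - Bmat l a n (k + 1))‖ ≤ C)) :=
  stmt13_general l hmono hpos a
end
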